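/- arXiv:1404.6808 — 2 statements merged into one kernel-verified Lean document; each statement's English description precedes it below -/
import Mathlib

section
/- The 3-dimensional Blaschke–Santaló diagram is star-shaped with respect to the point (1,1,1): for every convex body K in Euclidean n-space ℝⁿ with D(K) > 0 and every λ ∈ [0,1], there exists a convex body K' ⊆ ℝⁿ with D(K') > 0 such that r(K')/R(K') = λ·r(K)/R(K) + (1−λ), w(K')/(2·R(K')) = λ·w(K)/(2·R(K)) + (1−λ), and D(K')/(2·R(K')) = λ·D(K)/(2·R(K)) + (1−λ). -/
open Metric Set
open scoped RealInnerProductSpace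

/-- The diameter of a set. -/
noncomputable def sDiam {n : ℕ} (K : Set (EuclideanSpace ℝ (Fin n))) : ℝ :=
  Metric.diam K

/-- The circumradius: radius of the smallest enclosing closed ball. -/
noncomputable def circumradius {n : ℕ} (K : Set (EuclideanSpace ℝ (Fin n))) : ℝ :=
  sInf {ρ : ℝ | 0 ≤ ρ ∧ ∃ c, K ⊆ Metric.closedBall c ρ}

/-- The inradius: radius of a largest inscribed closed ball. -/
noncomputable def inradius {n : ℕ} (K : Set (EuclideanSpace ℝ (Fin n))) : ℝ :=
  sSup {ρ : ℝ | 0 ≤ ρ ∧ ∃ c, Metric.closedBall c ρ ⊆ K}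

/-- The (minimal) width: the smallest breadth over all directions. -/
noncomputable def width {n : ℕ} (K : Set (EuclideanSpace ℝ (Fin n))) : ℝ :=
  sInf {b : ℝ | ∃ u : EuclideanSpace ℝ (Fin n), ‖u‖ = 1 ∧
    b = sSup ((fun x => (inner ℝ u x : ℝ)) '' K) - sInf ((fun x => (inner ℝ u x : ℝ)) '' K)}

/-!
Replacing `K` by its outer parallel body `cthickening ε K = K + ε B` adds `ε` to the inradius and
to the circumradius and `2 ε` to the width and to the diameter. Hence `f (K + ε B)` runs along the
segment from `f K` to `(1, 1, 1)`, and `ε = R(K) (1 - λ) / λ` gives the point with parameter `λ`;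
for `λ = 0` one takes a ball.
-/

open Bornology
open scoped Pointwise

section NormedSpace

variable {V : Type*} [NormedAddCommGroup V] [NormedSpace ℝ V] [Nontrivial V]
  {K : Set V} {ε ρ : ℝ} {c x y : V}

lemma exists_norm_eq_one_smul_eq (v : V) : ∃ u : V, ‖u‖ = 1 ∧ ‖v‖ • u = v := by
  rcases eq_or_ne v 0 with rfl | hv
  · obtain ⟨u, hu⟩ := exists_norm_eq V zero_le_one
    exact ⟨u, hu, by simp⟩
  · exact ⟨‖v‖⁻¹ • v, by simpa using norm_smul_inv_norm (𝕜 := ℝ) hv,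
      smul_inv_smul₀ (norm_ne_zero_iff.2 hv) v⟩

lemma dist_add_two_mul_le_diam_cthickening (hK : IsBounded K) (hε : 0 ≤ ε) (hx : x ∈ K)
    (hy : y ∈ K) : dist x y + 2 * ε ≤ diam (cthickening ε K) := by
  obtain ⟨u, hu, hxy⟩ := exists_norm_eq_one_smul_eq (x - y)
  have hmem : ∀ z ∈ K, ∀ t : ℝ, |t| ≤ ε → z + t • u ∈ cthickening ε K := fun z hz t ht =>
    mem_cthickening_of_dist_le _ z _ _ hz (by simpa [dist_eq_norm, norm_smul, hu] using ht)
  have hdist : dist (x + ε • u) (y + (-ε) • u) = dist x y + 2 * ε := by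
    rw [dist_eq_norm, show x + ε • u - (y + (-ε) • u) = (‖x - y‖ + 2 * ε) • u by
        rw [add_smul, hxy, two_mul, add_smul, neg_smul]; abel,
      norm_smul, hu, mul_one, Real.norm_of_nonneg (by positivity), dist_eq_norm]
  rw [← hdist]
  exact dist_le_diam_of_mem hK.cthickening (hmem x hx ε (abs_of_nonneg hε).le)
    (hmem y hy (-ε) (by rw [abs_neg, abs_of_nonneg hε]))

lemma Bornology.IsBounded.diam_cthickening (hK : IsBounded K) (hne : K.Nonempty) (hε : 0 ≤ ε) :
    diam (Metric.cthickening ε K) = diam K + 2 * ε := by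
  refine le_antisymm (diam_cthickening_le K hε) ?_
  obtain ⟨x, hx⟩ := hne
  have hxx := dist_add_two_mul_le_diam_cthickening hK hε hx hx
  rw [dist_self, zero_add] at hxx
  have : diam K ≤ diam (Metric.cthickening ε K) - 2 * ε :=
    diam_le_of_forall_dist_le (by linarith) fun x hx y hy => by
      linarith [dist_add_two_mul_le_diam_cthickening hK hε hx hy]
  linarith

lemma subset_closedBall_sub_of_cthickening_subset (hε : 0 ≤ ε)
    (h : cthickening ε K ⊆ closedBall c ρ) : K ⊆ closedBall c (ρ - ε) := by
  intro y hy
  obtain ⟨u, hu, hyc⟩ := exists_norm_eq_one_smul_eq (y - c)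
  have hz : y + ε • u ∈ closedBall c ρ :=
    h (mem_cthickening_of_dist_le _ y _ _ hy (by simp [norm_smul, hu, abs_of_nonneg hε]))
  have hdist : dist (y + ε • u) c = dist y c + ε := by
    rw [dist_eq_norm, dist_eq_norm, show y + ε • u - c = (‖y - c‖ + ε) • u by
        rw [add_smul, hyc]; abel, norm_smul, hu, mul_one, Real.norm_of_nonneg (by positivity)]
  rw [mem_closedBall] at hz ⊢
  linarith

end NormedSpace

section InnerProductSpace

variable {V : Type*} [NormedAddCommGroup V] [InnerProductSpace ℝ V] {K : Set V} {ε ρ : ℝ} {x : V}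

/-- `width K` is by definition the infimum of `breadth K u` over unit vectors `u`. -/
noncomputable def breadth (K : Set V) (u : V) : ℝ :=
  sSup ((fun x => ⟪u, x⟫) '' K) - sInf ((fun x => ⟪u, x⟫) '' K)

lemma isGreatest_inner_closedBall (u c : V) (hρ : 0 ≤ ρ) :
    IsGreatest ((fun x => ⟪u, x⟫) '' closedBall c ρ) (⟪u, c⟫ + ρ * ‖u‖) := by
  refine ⟨⟨c + (ρ * ‖u‖⁻¹) • u, ?_, ?_⟩, ?_⟩
  · rw [mem_closedBall, dist_eq_norm, add_sub_cancel_left, norm_smul,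
      Real.norm_of_nonneg (by positivity), mul_assoc]
    exact mul_le_of_le_one_right hρ (inv_mul_le_one_of_le₀ le_rfl (norm_nonneg u))
  · rcases eq_or_ne u 0 with rfl | hu
    · simp
    · simp only [inner_add_right, real_inner_smul_right, real_inner_self_eq_norm_sq]
      field_simp
  · rintro _ ⟨x, hx, rfl⟩
    have := real_inner_le_norm u (x - c)
    rw [inner_sub_right, ← dist_eq_norm] at this
    nlinarith [mem_closedBall.1 hx, norm_nonneg u]

lemma isLeast_inner_closedBall (u c : V) (hρ : 0 ≤ ρ) :
    IsLeast ((fun x => ⟪u, x⟫) '' closedBall c ρ) (⟪u, c⟫ - ρ * ‖u‖) := by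
  refine ⟨⟨c - (ρ * ‖u‖⁻¹) • u, ?_, ?_⟩, ?_⟩
  · rw [mem_closedBall, dist_eq_norm, sub_sub_cancel_left, norm_neg, norm_smul,
      Real.norm_of_nonneg (by positivity), mul_assoc]
    exact mul_le_of_le_one_right hρ (inv_mul_le_one_of_le₀ le_rfl (norm_nonneg u))
  · rcases eq_or_ne u 0 with rfl | hu
    · simp
    · simp only [inner_sub_right, real_inner_smul_right, real_inner_self_eq_norm_sq]
      field_simp
  · rintro _ ⟨x, hx, rfl⟩
    have := real_inner_le_norm u (c - x)
    rw [inner_sub_right, ← dist_eq_norm, dist_comm] at this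
    nlinarith [mem_closedBall.1 hx, norm_nonneg u]

lemma IsCompact.image_inner (hK : IsCompact K) (u : V) : IsCompact ((fun x => ⟪u, x⟫) '' K) :=
  hK.image (continuous_const.inner continuous_id)

lemma IsCompact.sSup_inner_cthickening (hK : IsCompact K) (hne : K.Nonempty) (hε : 0 ≤ ε)
    (u : V) : sSup ((fun x => ⟪u, x⟫) '' cthickening ε K) =
      sSup ((fun x => ⟪u, x⟫) '' K) + ε * ‖u‖ := by
  have hball := isGreatest_inner_closedBall u 0 hε
  rw [inner_zero_right, zero_add] at hball
  have himg := hK.image_inner u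
  have hadd : (fun x => ⟪u, x⟫) '' (K + closedBall (0 : V) ε) =
      (fun x => ⟪u, x⟫) '' K + (fun x => ⟪u, x⟫) '' closedBall 0 ε :=
    image_add (innerSL ℝ u)
  rw [← hK.add_closedBall_zero hε, hadd,
    csSup_add (hne.image _) himg.bddAbove hball.nonempty hball.bddAbove, hball.csSup_eq]

lemma IsCompact.sInf_inner_cthickening (hK : IsCompact K) (hne : K.Nonempty) (hε : 0 ≤ ε)
    (u : V) : sInf ((fun x => ⟪u, x⟫) '' cthickening ε K) =
      sInf ((fun x => ⟪u, x⟫) '' K) - ε * ‖u‖ := by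
  have hball := isLeast_inner_closedBall u 0 hε
  rw [inner_zero_right, zero_sub] at hball
  have himg := hK.image_inner u
  have hadd : (fun x => ⟪u, x⟫) '' (K + closedBall (0 : V) ε) =
      (fun x => ⟪u, x⟫) '' K + (fun x => ⟪u, x⟫) '' closedBall 0 ε :=
    image_add (innerSL ℝ u)
  rw [← hK.add_closedBall_zero hε, hadd,
    csInf_add (hne.image _) himg.bddBelow hball.nonempty hball.bddBelow, hball.csInf_eq,
    ← sub_eq_add_neg]

lemma IsCompact.breadth_cthickening (hK : IsCompact K) (hne : K.Nonempty) (hε : 0 ≤ ε) (u : V) :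
    breadth (cthickening ε K) u = breadth K u + 2 * ε * ‖u‖ := by
  rw [breadth, breadth, hK.sSup_inner_cthickening hne hε, hK.sInf_inner_cthickening hne hε]
  ring

lemma IsCompact.breadth_nonneg (hK : IsCompact K) (hne : K.Nonempty) (u : V) :
    0 ≤ breadth K u := by
  obtain ⟨x, hx⟩ := hne
  have himg := hK.image_inner u
  exact sub_nonneg.2 ((csInf_le himg.bddBelow ⟨x, hx, rfl⟩).trans
    (le_csSup himg.bddAbove ⟨x, hx, rfl⟩))

lemma breadth_singleton (c u : V) : breadth {c} u = 0 := by
  simp [breadth]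

lemma Convex.exists_sSup_inner_lt [CompleteSpace V] (hcv : Convex ℝ K) (hK : IsClosed K)
    (hne : K.Nonempty) (hx : x ∉ K) : ∃ u : V, sSup ((fun y => ⟪u, y⟫) '' K) < ⟪u, x⟫ := by
  obtain ⟨f, t, hf, htx⟩ := geometric_hahn_banach_closed_point hcv hK hx
  refine ⟨(InnerProductSpace.toDual ℝ V).symm f, ?_⟩
  simp only [InnerProductSpace.toDual_symm_apply]
  exact (csSup_le (hne.image _) (by rintro _ ⟨y, hy, rfl⟩; exact (hf y hy).le)).trans_lt htx

/-- Cancellation of the ball summand: the support function of `cthickening ε K` is that of `K`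
plus `ε ‖·‖`, and a convex closed set is cut out by its supporting half-spaces. -/
lemma IsCompact.closedBall_sub_subset_of_closedBall_subset_cthickening [ProperSpace V]
    (hK : IsCompact K) (hcv : Convex ℝ K) (hne : K.Nonempty) (hε : 0 ≤ ε) {c : V}
    (h : closedBall c ρ ⊆ cthickening ε K) : closedBall c (ρ - ε) ⊆ K := by
  intro x hx
  by_contra hxK
  obtain ⟨u, hu⟩ := hcv.exists_sSup_inner_lt hK.isClosed hne hxK
  have hρε : 0 ≤ ρ - ε := dist_nonneg.trans hx
  have hball := isGreatest_inner_closedBall u c (hρε.trans (sub_le_self ρ hε))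
  have hsup : ⟪u, c⟫ + ρ * ‖u‖ ≤ sSup ((fun y => ⟪u, y⟫) '' K) + ε * ‖u‖ := by
    rw [← hK.sSup_inner_cthickening hne hε, ← hball.csSup_eq]
    exact csSup_le_csSup (hK.cthickening.image_inner u).bddAbove
      hball.nonempty (image_mono h)
  have hxc := (isGreatest_inner_closedBall u c hρε).2 ⟨x, hx, rfl⟩
  simp only [sub_mul] at hxc
  linarith

end InnerProductSpace

section EuclideanSpace

variable {n : ℕ} {K : Set (EuclideanSpace ℝ (Fin n))} {ε ρ a : ℝ}

local notation "E" => EuclideanSpace ℝ (Fin n)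

lemma circumradius_le {c : E} (hρ : 0 ≤ ρ) (h : K ⊆ closedBall c ρ) : circumradius K ≤ ρ :=
  csInf_le ⟨0, fun _ h => h.1⟩ ⟨hρ, c, h⟩

lemma le_circumradius (hK : IsBounded K) (h : ∀ ρ, 0 ≤ ρ → ∀ c, K ⊆ closedBall c ρ → a ≤ ρ) :
    a ≤ circumradius K := by
  obtain ⟨r, hr, hKr⟩ := hK.subset_closedBall_lt 0 0
  exact le_csInf ⟨r, hr.le, 0, hKr⟩ fun ρ ⟨hρ, c, hc⟩ => h ρ hρ c hc

lemma sDiam_le_two_mul_circumradius (hK : IsBounded K) : sDiam K ≤ 2 * circumradius K := by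
  have : sDiam K / 2 ≤ circumradius K := le_circumradius hK fun ρ hρ c hc => by
    have : sDiam K ≤ 2 * ρ := (diam_mono hc isBounded_closedBall).trans (diam_closedBall hρ)
    linarith
  linarith

lemma sDiam_cthickening [NeZero n] (hK : IsBounded K) (hne : K.Nonempty) (hε : 0 ≤ ε) :
    sDiam (cthickening ε K) = sDiam K + 2 * ε :=
  hK.diam_cthickening hne hε

lemma circumradius_cthickening [NeZero n] (hK : IsBounded K) (hne : K.Nonempty) (hε : 0 ≤ ε) :
    circumradius (cthickening ε K) = circumradius K + ε := by
  refine le_antisymm ?_ (le_circumradius hK.cthickening fun ρ hρ c hc => ?_)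
  · have : circumradius (cthickening ε K) - ε ≤ circumradius K :=
      le_circumradius hK fun ρ hρ c hc => by
        have hsub : cthickening ε K ⊆ closedBall c (ρ + ε) := by
          rw [add_comm, ← cthickening_closedBall hε hρ]
          exact cthickening_subset_of_subset ε hc
        linarith [circumradius_le (by positivity) hsub]
    linarith
  · have hsub := subset_closedBall_sub_of_cthickening_subset hε hc
    have hρε : 0 ≤ ρ - ε := nonempty_closedBall.1 (hne.mono hsub)
    linarith [circumradius_le hρε hsub]

lemma circumradius_singleton (c : E) : circumradius {c} = 0 :=
  le_antisymm (circumradius_le le_rfl (by rw [closedBall_zero]))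
    (le_circumradius isBounded_singleton fun _ hρ _ _ => hρ)

lemma two_mul_le_sDiam_of_closedBall_subset [NeZero n] {c : E} (hK : IsBounded K) (hρ : 0 ≤ ρ)
    (h : closedBall c ρ ⊆ K) : 2 * ρ ≤ sDiam K := by
  have hball := dist_add_two_mul_le_diam_cthickening isBounded_singleton hρ
    (mem_singleton c) (mem_singleton c)
  rw [dist_self, zero_add, cthickening_singleton c hρ] at hball
  exact hball.trans (diam_mono h hK)

lemma le_inradius [NeZero n] {c : E} (hK : IsBounded K) (hρ : 0 ≤ ρ) (h : closedBall c ρ ⊆ K) :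
    ρ ≤ inradius K :=
  le_csSup ⟨sDiam K / 2, fun _ ⟨hσ, _, hc⟩ => by
    linarith [two_mul_le_sDiam_of_closedBall_subset hK hσ hc]⟩ ⟨hρ, c, h⟩

lemma inradius_le (hne : K.Nonempty) (h : ∀ ρ, 0 ≤ ρ → ∀ c, closedBall c ρ ⊆ K → ρ ≤ a) :
    inradius K ≤ a := by
  obtain ⟨x, hx⟩ := hne
  exact csSup_le ⟨0, le_rfl, x, by simpa using hx⟩ fun ρ ⟨hρ, c, hc⟩ => h ρ hρ c hc

lemma inradius_cthickening [NeZero n] (hK : IsCompact K) (hcv : Convex ℝ K) (hne : K.Nonempty)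
    (hε : 0 ≤ ε) : inradius (cthickening ε K) = inradius K + ε := by
  obtain ⟨x, hx⟩ := hne
  have hr : 0 ≤ inradius K := le_inradius hK.isBounded le_rfl (by simpa using hx)
  refine le_antisymm (inradius_le ⟨x, self_subset_cthickening K hx⟩ fun ρ hρ c hc => ?_) ?_
  · rcases le_or_gt ρ ε with hρε | hερ
    · linarith
    · linarith [le_inradius hK.isBounded (by linarith)
        (hK.closedBall_sub_subset_of_closedBall_subset_cthickening hcv ⟨x, hx⟩ hε hc)]
  · have : inradius K ≤ inradius (cthickening ε K) - ε :=
      inradius_le ⟨x, hx⟩ fun ρ hρ c hc => by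
        have hsub : closedBall c (ρ + ε) ⊆ cthickening ε K := by
          rw [add_comm, ← cthickening_closedBall hε hρ]
          exact cthickening_subset_of_subset ε hc
        linarith [le_inradius hK.cthickening.isBounded (by positivity) hsub]
    linarith

lemma inradius_singleton [NeZero n] (c : E) : inradius {c} = 0 :=
  le_antisymm
    (inradius_le (singleton_nonempty c) fun ρ hρ _ hc => by
      have : sDiam ({c} : Set E) = 0 := diam_singleton
      linarith [two_mul_le_sDiam_of_closedBall_subset isBounded_singleton hρ hc])
    (le_inradius isBounded_singleton le_rfl (by rw [closedBall_zero]))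

lemma width_le_breadth {u : E} (hK : IsCompact K) (hne : K.Nonempty) (hu : ‖u‖ = 1) :
    width K ≤ breadth K u :=
  csInf_le ⟨0, by rintro _ ⟨v, -, rfl⟩; exact hK.breadth_nonneg hne v⟩ ⟨u, hu, rfl⟩

lemma le_width [NeZero n] (h : ∀ u : E, ‖u‖ = 1 → a ≤ breadth K u) : a ≤ width K := by
  obtain ⟨u, hu⟩ := exists_norm_eq E zero_le_one
  exact le_csInf ⟨_, u, hu, rfl⟩ (by rintro _ ⟨v, hv, rfl⟩; exact h v hv)

lemma width_cthickening [NeZero n] (hK : IsCompact K) (hne : K.Nonempty) (hε : 0 ≤ ε) :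
    width (cthickening ε K) = width K + 2 * ε := by
  have hbreadth (u : E) (hu : ‖u‖ = 1) : breadth (cthickening ε K) u = breadth K u + 2 * ε := by
    rw [hK.breadth_cthickening hne hε, hu, mul_one]
  have hne' : (cthickening ε K).Nonempty := hne.mono (self_subset_cthickening K)
  refine le_antisymm ?_ (le_width fun u hu => ?_)
  · have : width (cthickening ε K) - 2 * ε ≤ width K := le_width fun u hu => by
      linarith [width_le_breadth hK.cthickening hne' hu, hbreadth u hu]
    linarith
  · linarith [width_le_breadth hK hne hu, hbreadth u hu]

lemma width_singleton [NeZero n] (c : E) : width {c} = 0 := by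
  obtain ⟨u, hu⟩ := exists_norm_eq E zero_le_one
  exact le_antisymm
    ((width_le_breadth isCompact_singleton (singleton_nonempty c) hu).trans_eq
      (breadth_singleton c u))
    (le_width fun u _ => (breadth_singleton c u).ge)

end EuclideanSpace

theorem diagram_starshaped (n : ℕ) (K : Set (EuclideanSpace ℝ (Fin n)))
    (hne : K.Nonempty) (hcp : IsCompact K) (hcv : Convex ℝ K)
    (hD : 0 < sDiam K) (lam : ℝ) (hlam : lam ∈ Set.Icc (0 : ℝ) 1) :
    ∃ K' : Set (EuclideanSpace ℝ (Fin n)),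
      K'.Nonempty ∧ IsCompact K' ∧ Convex ℝ K' ∧ 0 < sDiam K' ∧
      inradius K' / circumradius K' =
        lam * (inradius K / circumradius K) + (1 - lam) ∧
      width K' / (2 * circumradius K') =
        lam * (width K / (2 * circumradius K)) + (1 - lam) ∧
      sDiam K' / (2 * circumradius K') =
        lam * (sDiam K / (2 * circumradius K)) + (1 - lam) := by
  have : NeZero n := ⟨by rintro rfl; exact hD.ne' (diam_subsingleton subsingleton_of_subsingleton)⟩
  have hR : 0 < circumradius K := by linarith [sDiam_le_two_mul_circumradius hcp.isBounded]
  rcases hlam.1.eq_or_lt with rfl | hlam0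
  · have hpt : ({0} : Set (EuclideanSpace ℝ (Fin n))).Nonempty := singleton_nonempty 0
    refine ⟨cthickening 1 {0}, hpt.mono (self_subset_cthickening _),
      isCompact_singleton.cthickening, (convex_singleton 0).cthickening 1, ?_⟩
    rw [sDiam_cthickening isBounded_singleton hpt zero_le_one,
      inradius_cthickening isCompact_singleton (convex_singleton 0) hpt zero_le_one,
      circumradius_cthickening isBounded_singleton hpt zero_le_one,
      width_cthickening isCompact_singleton hpt zero_le_one, inradius_singleton, width_singleton,
      circumradius_singleton, sDiam, diam_singleton]
    norm_num
  · set ε := circumradius K * (1 - lam) / lam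
    have hε : 0 ≤ ε := div_nonneg (mul_nonneg hR.le (by linarith [hlam.2])) hlam0.le
    refine ⟨cthickening ε K, hne.mono (self_subset_cthickening K), hcp.cthickening,
      hcv.cthickening ε, ?_⟩
    rw [sDiam_cthickening hcp.isBounded hne hε, inradius_cthickening hcp hcv hne hε,
      circumradius_cthickening hcp.isBounded hne hε, width_cthickening hcp hne hε]
    refine ⟨by positivity, ?_, ?_, ?_⟩ <;> simp only [ε] <;> field_simp <;> ring
end

section
/- Let K be a convex body in Euclidean n-space ℝⁿ, u a unit vector, and α ≤ β real numbers such that K ⊆ { x : α ≤ ⟨u, x⟩ ≤ β }, both hyperplanes meet K (there are points x, y ∈ K with ⟨u, x⟩ = β and ⟨u, y⟩ = α), and β − α = w(K) (the two parallel supporting hyperplanes are at distance equal to the width). Then there exists y ∈ K with ⟨u, y⟩ = α and y + (β − α)·u ∈ K, i.e. the two hyperplanes support a segment with endpoints in K perpendicular to both hyperplanes. -/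
open Metric Set
open scoped RealInnerProductSpace

/-!
If no segment of length `β - α` in direction `u` joined the faces `K ∩ {⟪u, ·⟫ = β}` and
`K ∩ {⟪u, ·⟫ = α}`, the top face translated by `-(β - α) • u` and the bottom face would be disjoint
compact convex sets in one hyperplane, hence strictly separated, say `⟪v, ·⟫ < m₁ < m₂ < ⟪v, ·⟫`,
by a functional with `v ⟂ u`. By compactness the same inequalities hold on `K` near the two
supporting hyperplanes, so for small `t > 0` the direction `u + t • v`, of norm at least `1`,
confines `K` to a slab of breadth at most `β - α - t * (m₂ - m₁) < width K`.
-/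

open Filter Topology

section Tilt

variable {X : Type*} [TopologicalSpace X] {K : Set X} {f g : X → ℝ} {β m : ℝ}

theorem IsCompact.exists_pos_lt_of_lt_at_max (hK : IsCompact K) (hf : Continuous f)
    (hg : Continuous g) (hgβ : ∀ x ∈ K, g x ≤ β) (hfm : ∀ x ∈ K, g x = β → f x < m) :
    ∃ ε > 0, ∀ x ∈ K, β - ε < g x → f x < m := by
  set C := K ∩ {x | m ≤ f x}
  obtain hC | hC := C.eq_empty_or_nonempty
  · exact ⟨1, one_pos, fun x hx _ => not_le.1 fun hfx => hC.subset ⟨hx, hfx⟩⟩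
  obtain ⟨x₀, ⟨hx₀K, hx₀m⟩, hmax⟩ :=
    (hK.inter_right (isClosed_le continuous_const hf)).exists_isMaxOn hC hg.continuousOn
  have hx₀β : g x₀ < β := (hgβ x₀ hx₀K).lt_of_ne fun h => (hfm x₀ hx₀K h).not_ge hx₀m
  refine ⟨β - g x₀, sub_pos.2 hx₀β, fun x hx hgx => not_le.1 fun hfx => ?_⟩
  have : g x ≤ g x₀ := hmax ⟨hx, hfx⟩
  linarith

theorem IsCompact.eventually_forall_add_mul_le (hK : IsCompact K) (hf : Continuous f)
    (hg : Continuous g) (hgβ : ∀ x ∈ K, g x ≤ β) (hfm : ∀ x ∈ K, g x = β → f x < m) :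
    ∀ᶠ t in 𝓝[>] (0 : ℝ), ∀ x ∈ K, g x + t * f x ≤ β + t * m := by
  obtain ⟨ε, hε, hnear⟩ := hK.exists_pos_lt_of_lt_at_max hf hg hgβ hfm
  obtain ⟨M, hM⟩ := (hK.image hf).bddAbove
  have hsmall : ∀ᶠ t in 𝓝 (0 : ℝ), t * (M - m) < ε := by
    have : Tendsto (fun t : ℝ => t * (M - m)) (𝓝 0) (𝓝 0) :=
      (continuous_id.mul continuous_const).tendsto' 0 0 (zero_mul _)
    exact this.eventually (gt_mem_nhds hε)
  filter_upwards [nhdsWithin_le_nhds hsmall, self_mem_nhdsWithin] with t hts (ht : 0 < t) x hx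
  by_cases hx' : β - ε < g x
  · have := hnear x hx hx'
    nlinarith [hgβ x hx]
  · have : f x ≤ M := hM ⟨x, hx, rfl⟩
    nlinarith

end Tilt

section Separation

variable {E : Type*} [NormedAddCommGroup E] [InnerProductSpace ℝ E] [CompleteSpace E]

theorem exists_inner_separation_of_forall_sub_smul_notMem {u : E} (hu : ‖u‖ = 1)
    {A B : Set E} {a b : ℝ} (hAc : IsCompact A) (hAv : Convex ℝ A) (hBc : IsClosed B)
    (hBv : Convex ℝ B) (hA : ∀ x ∈ A, ⟪u, x⟫ = b) (hB : ∀ y ∈ B, ⟪u, y⟫ = a)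
    (hAB : ∀ x ∈ A, x - (b - a) • u ∉ B) :
    ∃ v : E, ⟪u, v⟫ = 0 ∧ ∃ m₁ m₂ : ℝ, m₁ < m₂ ∧ (∀ x ∈ A, ⟪v, x⟫ < m₁) ∧
      ∀ y ∈ B, m₂ < ⟪v, y⟫ := by
  set c := (b - a) • u
  have hdisj : Disjoint A ((fun x => -c + x) ⁻¹' B) :=
    disjoint_left.2 fun x hx hxB => hAB x hx (by simpa [sub_eq_neg_add] using hxB)
  obtain ⟨f, s₁, s₂, hf₁, hs, hf₂⟩ := geometric_hahn_banach_compact_closed hAv hAc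
    (hBv.translate_preimage_right (-c)) (hBc.preimage (continuous_const_add (-c))) hdisj
  set w := (InnerProductSpace.toDual ℝ E).symm f
  have hw : ∀ x, ⟪w, x⟫ = f x := fun x => InnerProductSpace.toDual_symm_apply
  have huu : ⟪u, u⟫ = 1 := by rw [real_inner_self_eq_norm_sq, hu, one_pow]
  -- Projecting `w` onto `u⟂` changes `⟪w, ·⟫` by a constant on each of the two hyperplanes.
  have hproj : ∀ x, ⟪w - ⟪u, w⟫ • u, x⟫ = f x - ⟪u, w⟫ * ⟪u, x⟫ := fun x => by
    rw [inner_sub_left, real_inner_smul_left, hw]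
  refine ⟨w - ⟪u, w⟫ • u, ?_, s₁ - b * ⟪u, w⟫, s₂ - b * ⟪u, w⟫, by linarith, ?_, ?_⟩
  · rw [inner_sub_right, real_inner_smul_right, huu, mul_one, sub_self]
  · intro x hx
    have := hf₁ x hx
    rw [hproj, hA x hx]
    nlinarith
  · intro y hy
    have := hf₂ (y + c) (by simpa using hy)
    rw [map_add, ← hw c, real_inner_smul_right, real_inner_comm] at this
    rw [hproj, hB y hy]
    nlinarith

end Separation

theorem norm_le_norm_add_of_inner_eq_zero {E : Type*} [NormedAddCommGroup E]
    [InnerProductSpace ℝ E] {x y : E} (h : ⟪x, y⟫ = 0) : ‖x‖ ≤ ‖x + y‖ := by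
  have := norm_add_sq_eq_norm_sq_add_norm_sq_real h
  nlinarith [norm_nonneg x, norm_nonneg (x + y), mul_self_nonneg ‖y‖]

section Width

variable {n : ℕ} {K : Set (EuclideanSpace ℝ (Fin n))}

theorem width_le_sSup_sub_sInf (hK : IsCompact K) {u : EuclideanSpace ℝ (Fin n)}
    (hu : ‖u‖ = 1) :
    width K ≤ sSup ((fun x => ⟪u, x⟫) '' K) - sInf ((fun x => ⟪u, x⟫) '' K) := by
  refine csInf_le ⟨0, ?_⟩ ⟨u, hu, rfl⟩
  rintro _ ⟨w, -, rfl⟩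
  have hKw := hK.image (continuous_const.inner continuous_id : Continuous fun x => ⟪w, x⟫)
  exact sub_nonneg.2 (Real.sInf_le_sSup _ hKw.bddBelow hKw.bddAbove)

theorem width_le_of_forall_inner_mem_Icc (hK : IsCompact K) (hne : K.Nonempty)
    {w : EuclideanSpace ℝ (Fin n)} (hw : 1 ≤ ‖w‖) {a b : ℝ}
    (h : ∀ x ∈ K, ⟪w, x⟫ ∈ Icc a b) : width K ≤ b - a := by
  have hN : 0 < ‖w‖ := one_pos.trans_le hw
  have hab : a ≤ b := hne.elim fun x hx => (h x hx).1.trans (h x hx).2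
  have hunit : ‖‖w‖⁻¹ • w‖ = 1 := norm_smul_inv_norm (𝕜 := ℝ) (norm_pos_iff.1 hN)
  have hscale : ∀ x, ⟪‖w‖⁻¹ • w, x⟫ = ‖w‖⁻¹ * ⟪w, x⟫ := fun x => real_inner_smul_left _ _ _
  calc width K
      ≤ sSup ((fun x => ⟪‖w‖⁻¹ • w, x⟫) '' K) - sInf ((fun x => ⟪‖w‖⁻¹ • w, x⟫) '' K) :=
        width_le_sSup_sub_sInf hK hunit
    _ ≤ ‖w‖⁻¹ * b - ‖w‖⁻¹ * a := by
        gcongr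
        · refine csSup_le (hne.image _) ?_
          rintro _ ⟨x, hx, rfl⟩
          simp only [hscale]
          exact mul_le_mul_of_nonneg_left (h x hx).2 (inv_nonneg.2 hN.le)
        · refine le_csInf (hne.image _) ?_
          rintro _ ⟨x, hx, rfl⟩
          simp only [hscale]
          exact mul_le_mul_of_nonneg_left (h x hx).1 (inv_nonneg.2 hN.le)
    _ = (b - a) / ‖w‖ := by ring
    _ ≤ b - a := div_le_self (sub_nonneg.2 hab) hw

end Width

theorem width_attained_by_perpendicular_segment_general (n : ℕ)
    (K : Set (EuclideanSpace ℝ (Fin n)))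
    (hne : K.Nonempty) (hcp : IsCompact K) (hcv : Convex ℝ K)
    (u : EuclideanSpace ℝ (Fin n)) (hu : ‖u‖ = 1) (α β : ℝ)
    (hslab : K ⊆ {x | α ≤ (inner ℝ u x : ℝ) ∧ (inner ℝ u x : ℝ) ≤ β})
    (hw : β - α = width K) :
    ∃ y ∈ K, (inner ℝ u y : ℝ) = α ∧ y + (β - α) • u ∈ K := by
  by_contra! hcon
  have hcont : ∀ v : EuclideanSpace ℝ (Fin n), Continuous fun x => ⟪v, x⟫ :=
    fun v => continuous_const.inner continuous_id
  have hlevel : ∀ r, IsClosed {x | ⟪u, x⟫ = r} ∧ Convex ℝ {x | ⟪u, x⟫ = r} := fun r =>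
    ⟨isClosed_eq (hcont u) continuous_const, convex_hyperplane (innerₛₗ ℝ u).isLinear r⟩
  obtain ⟨v, huv, m₁, m₂, hm, htop, hbot⟩ :=
    exists_inner_separation_of_forall_sub_smul_notMem hu
      (hcp.inter_right (hlevel β).1) (hcv.inter (hlevel β).2)
      (hcp.isClosed.inter (hlevel α).1) (hcv.inter (hlevel α).2)
      (fun x hx => hx.2) (fun y hy => hy.2)
      (fun x hx hxB => hcon _ hxB.1 hxB.2 (by simpa using hx.1))
  have hupper := hcp.eventually_forall_add_mul_le (hcont v) (hcont u)
    (fun x hx => (hslab hx).2) (fun x hx hxβ => htop x ⟨hx, hxβ⟩)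
  have hlower := hcp.eventually_forall_add_mul_le (f := fun x => -⟪v, x⟫)
    (g := fun x => -⟪u, x⟫) (β := -α) (m := -m₂) (hcont v).neg (hcont u).neg
    (fun x hx => neg_le_neg (hslab hx).1)
    (fun x hx hxα => neg_lt_neg (hbot x ⟨hx, neg_inj.1 hxα⟩))
  obtain ⟨t, hup, hlow, ht⟩ := (hupper.and (hlower.and self_mem_nhdsWithin)).exists
  have hnorm : 1 ≤ ‖u + t • v‖ := hu ▸ norm_le_norm_add_of_inner_eq_zero
    (by rw [real_inner_smul_right, huv, mul_zero])
  have hwidth : width K ≤ (β + t * m₁) - (α + t * m₂) := by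
    refine width_le_of_forall_inner_mem_Icc hcp hne hnorm fun x hx => ?_
    rw [inner_add_left, real_inner_smul_left]
    constructor <;> linarith [hup x hx, hlow x hx]
  linarith [mul_pos ht (sub_pos.2 hm)]

theorem width_attained_by_perpendicular_segment (n : ℕ)
    (K : Set (EuclideanSpace ℝ (Fin n)))
    (hne : K.Nonempty) (hcp : IsCompact K) (hcv : Convex ℝ K)
    (u : EuclideanSpace ℝ (Fin n)) (hu : ‖u‖ = 1) (α β : ℝ) (hαβ : α ≤ β)
    (hslab : K ⊆ {x | α ≤ (inner ℝ u x : ℝ) ∧ (inner ℝ u x : ℝ) ≤ β})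
    (htop : ∃ x ∈ K, (inner ℝ u x : ℝ) = β)
    (hbot : ∃ y ∈ K, (inner ℝ u y : ℝ) = α)
    (hw : β - α = width K) :
    ∃ y ∈ K, (inner ℝ u y : ℝ) = α ∧ y + (β - α) • u ∈ K :=
  width_attained_by_perpendicular_segment_general n K hne hcp hcv u hu α β hslab hw
end
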